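/- In the setting of quantized approximation of martingale couplings with 1 ≤ p ≤ 2: for μ ≤_cvx ν on ℝ^d with ν compactly supported, π ∈ M(μ,ν), μ̂^N a quadratic optimal primal N-quantization of μ and ν̌^K an L^p-optimal dual K-quantization of ν, the coupling π̄^{N,K} built by composing the nearest-neighbour projection and the splitting operator satisfies W_p^p(π̄^{N,K}, π) ≤ e^p_{2,N}(μ) + d^p_{p,K}(ν), where W_p is the Wasserstein distance on P(ℝ^d × ℝ^d). -/

import Mathlib

open MeasureTheory Set

noncomputable section

abbrev Ed (d : ℕ) := EuclideanSpace ℝ (Fin d)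

variable {E : Type*} [NormedAddCommGroup E] [NormedSpace ℝ E] [MeasurableSpace E] [BorelSpace E]

/-- A coupling between `μ` and `ν`. -/
def IsCoupling (π : Measure (E × E)) (μ ν : Measure E) : Prop :=
  π.map Prod.fst = μ ∧ π.map Prod.snd = ν

/-- A martingale coupling between `μ` and `ν` : a probability coupling such that the
conditional expectation of the second coordinate given the first is the first. -/
def IsMartingaleCoupling (π : Measure (E × E)) (μ ν : Measure E) : Prop :=
  IsProbabilityMeasure π ∧ IsCoupling π μ ν ∧
    ∀ A : Set E, MeasurableSet A →
      ∫ q in A ×ˢ (univ : Set E), (q.2 - q.1) ∂π = 0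

/-- The convex order `μ ≤_cvx ν`. -/
def ConvexOrder (μ ν : Measure E) : Prop :=
  ∀ φ : E → ℝ, ConvexOn ℝ univ φ → Integrable φ μ → Integrable φ ν →
    ∫ x, φ x ∂μ ≤ ∫ x, φ x ∂ν

/-- The `p`-th power transport cost of a coupling. -/
def pCost (p : ℝ) (π : Measure (E × E)) : ℝ := ∫ q, ‖q.2 - q.1‖ ^ p ∂π

/-- `W_p(μ,ν)^p`. -/
def WpPow (p : ℝ) (μ ν : Measure E) : ℝ :=
  sInf {c | ∃ π : Measure (E × E), IsProbabilityMeasure π ∧ IsCoupling π μ ν ∧ c = pCost p π}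

/-- The Wasserstein distance `W_p(μ,ν)`. -/
def Wp (p : ℝ) (μ ν : Measure E) : ℝ := WpPow p μ ν ^ (1 / p)

/-- `M_p(μ,ν)^p` : the martingale transport cost. -/
def MpPow (p : ℝ) (μ ν : Measure E) : ℝ :=
  sInf {c | ∃ π : Measure (E × E), IsMartingaleCoupling π μ ν ∧ c = pCost p π}

/-- `M_p(μ,ν)`. -/
def Mp (p : ℝ) (μ ν : Measure E) : ℝ := MpPow p μ ν ^ (1 / p)

/-- A Borel nearest-neighbour projection onto the finite set `Γ`. -/
def IsNearestProj (Γ : Finset E) (f : E → E) : Prop :=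
  Measurable f ∧ ∀ x, f x ∈ Γ ∧ ‖x - f x‖ = Metric.infDist x (Γ : Set E)

/-- `e_p(Γ,μ)^p`, the `p`-th power quantization error on the grid `Γ`. -/
def quantErrPow (p : ℝ) (Γ : Finset E) (μ : Measure E) : ℝ :=
  ∫ x, Metric.infDist x (Γ : Set E) ^ p ∂μ

/-- `Γ` is an `L^p`-optimal `N`-quantizer of `μ`. -/
def IsOptimalQuantizer (p : ℝ) (N : ℕ) (Γ : Finset E) (μ : Measure E) : Prop :=
  Γ.Nonempty ∧ Γ.card ≤ N ∧
    ∀ Γ' : Finset E, Γ'.Nonempty → Γ'.card ≤ N → quantErrPow p Γ μ ≤ quantErrPow p Γ' μ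

/-- `ν` is supported on at most `N` points. -/
def SuppLE (N : ℕ) (ν : Measure E) : Prop :=
  ∃ s : Finset E, s.card ≤ N ∧ ν ((s : Set E)ᶜ) = 0

/-! Sample `(X, Y) ∼ π` and an independent `U` uniform on `[0, 1]`; the law of
`((f X, g Y U), (X, Y))` couples `π̄^{N,K}` with `π`. Its cost is bounded pointwise, via
`(a² + b²)^{p/2} ≤ a^p + b^p` for `p ≤ 2`, by `‖X - f X‖^p + ‖Y - g Y U‖^p`. The second
term integrates to `d_{p,K}^p(ν)`, and by Jensen for the concave map `t ↦ t^{p/2}` the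
first integrates to at most `(∫ ‖x - f x‖² dμ)^{p/2} = e_{2,N}^p(μ)`. -/

open Bornology Function
open scoped ENNReal

theorem sq_add_sq_rpow_div_two_le {s t p : ℝ} (hs : 0 ≤ s) (ht : 0 ≤ t) (hp0 : 0 ≤ p)
    (hp2 : p ≤ 2) : (s ^ (2 : ℝ) + t ^ (2 : ℝ)) ^ (p / 2) ≤ s ^ p + t ^ p := by
  have hsq : ∀ {x : ℝ}, 0 ≤ x → (x ^ (2 : ℝ)) ^ (p / 2) = x ^ p := fun hx => by
    rw [← Real.rpow_mul hx, mul_div_cancel₀ _ two_ne_zero]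
  calc (s ^ (2 : ℝ) + t ^ (2 : ℝ)) ^ (p / 2)
      ≤ (s ^ (2 : ℝ)) ^ (p / 2) + (t ^ (2 : ℝ)) ^ (p / 2) :=
        Real.rpow_add_le_add_rpow (by positivity) (by positivity) (by linarith) (by linarith)
    _ = s ^ p + t ^ p := by rw [hsq hs, hsq ht]

section Moments

variable {α X : Type*} [MeasurableSpace α] [NormedAddCommGroup X] {μ : Measure α}

theorem integral_norm_rpow_le_rpow_integral_norm_rpow [IsProbabilityMeasure μ]
    {F : α → X} {p q : ℝ} (hp : 0 < p) (hpq : p ≤ q) (hF : MemLp F (ENNReal.ofReal q) μ) :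
    ∫ a, ‖F a‖ ^ p ∂μ ≤ (∫ a, ‖F a‖ ^ q ∂μ) ^ (p / q) := by
  have hq : 0 < q := hp.trans_le hpq
  have hFq : Integrable (fun a => ‖F a‖ ^ q) μ := by
    simpa [hq.le] using hF.integrable_norm_rpow'
  have hFp : Integrable (fun a => ‖F a‖ ^ p) μ := by
    simpa [hp.le] using (hF.mono_exponent (ENNReal.ofReal_le_ofReal hpq)).integrable_norm_rpow'
  have hpow : ∀ a, (‖F a‖ ^ q) ^ (p / q) = ‖F a‖ ^ p := fun a => by
    rw [← Real.rpow_mul (norm_nonneg _), mul_div_cancel₀ _ hq.ne']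
  have hconc : ConcaveOn ℝ (Ici 0) fun x : ℝ => x ^ (p / q) :=
    Real.concaveOn_rpow (by positivity) ((div_le_one hq).2 hpq)
  simpa only [hpow] using hconc.le_map_integral
    (continuousOn_id.rpow_const fun _ _ => Or.inr (by positivity)) isClosed_Ici
    (ae_of_all _ fun a => mem_Ici.2 (by positivity)) hFq
    (by simpa only [comp_def, hpow] using hFp)

theorem integrable_norm_rpow_of_ae_norm_le [IsFiniteMeasure μ] {F : α → X} {p C : ℝ}
    (hp : 0 ≤ p) (hF : AEStronglyMeasurable F μ) (hFC : ∀ᵐ a ∂μ, ‖F a‖ ≤ C) :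
    Integrable (fun a => ‖F a‖ ^ p) μ := by
  simpa [hp] using ((memLp_top_of_bound hF C hFC).mono_exponent
    (le_top (a := ENNReal.ofReal p))).integrable_norm_rpow'

theorem MeasureTheory.MemLp.sub_of_isBounded_range [IsFiniteMeasure μ] {F G : α → X}
    {p : ℝ≥0∞} (hF : MemLp F p μ) (hG : AEStronglyMeasurable G μ)
    (hGb : IsBounded (range G)) : MemLp (F - G) p μ :=
  let ⟨C, hC⟩ := hGb.exists_norm_le
  hF.sub (MemLp.of_bound hG C (ae_of_all _ fun a => hC _ (mem_range_self a)))

end Moments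

theorem MeasureTheory.MeasurePreserving.integral_comp_of_aestronglyMeasurable {α β G : Type*}
    [MeasurableSpace α] [MeasurableSpace β] [NormedAddCommGroup G] [NormedSpace ℝ G]
    {μ : Measure α} {ν : Measure β} {f : α → β} {g : β → G}
    (h : MeasurePreserving f μ ν) (hg : AEStronglyMeasurable g ν) :
    ∫ x, g (f x) ∂μ = ∫ y, g y ∂ν := by
  rw [← h.map_eq] at hg ⊢
  exact (integral_map h.measurable.aemeasurable hg).symm

section SplitCoupling

variable {X U : Type*} [MeasurableSpace X] [MeasurableSpace U]

def splitCoupling (f : X → X) (g : X → U → X) (π : Measure (X × X)) (η : Measure U) :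
    Measure ((X × X) × (X × X)) :=
  (π.prod η).map fun q => ((f q.1.1, g q.1.2 q.2), q.1)

variable {f : X → X} {g : X → U → X} {π : Measure (X × X)} {η : Measure U}

theorem measurable_splitCoupling_map (hf : Measurable f) (hg : Measurable (uncurry g)) :
    Measurable fun q : (X × X) × U => ((f q.1.1, g q.1.2 q.2), q.1) :=
  ((hf.comp (measurable_fst.comp measurable_fst)).prodMk
    (hg.comp ((measurable_snd.comp measurable_fst).prodMk measurable_snd))).prodMk measurable_fst

theorem isProbabilityMeasure_splitCoupling [IsProbabilityMeasure π] [IsProbabilityMeasure η]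
    (hf : Measurable f) (hg : Measurable (uncurry g)) :
    IsProbabilityMeasure (splitCoupling f g π η) :=
  Measure.isProbabilityMeasure_map (measurable_splitCoupling_map hf hg).aemeasurable

theorem splitCoupling_map_fst (hf : Measurable f) (hg : Measurable (uncurry g)) :
    (splitCoupling f g π η).map Prod.fst = (π.prod η).map fun q => (f q.1.1, g q.1.2 q.2) := by
  rw [splitCoupling, Measure.map_map measurable_fst (measurable_splitCoupling_map hf hg)]
  rfl

theorem splitCoupling_map_snd [SFinite π] [IsProbabilityMeasure η] (hf : Measurable f)
    (hg : Measurable (uncurry g)) : (splitCoupling f g π η).map Prod.snd = π := by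
  rw [splitCoupling, Measure.map_map measurable_snd (measurable_splitCoupling_map hf hg)]
  exact measurePreserving_fst.map_eq

theorem integrable_norm_sub_rpow_prod [NormedAddCommGroup X] [BorelSpace X]
    [SecondCountableTopology X] {ν : Measure X} [IsFiniteMeasure ν] [IsFiniteMeasure η]
    {K : Set X} (hK : IsBounded K) (hνK : ν Kᶜ = 0) (hg : Measurable (uncurry g))
    (hgb : IsBounded (range (uncurry g))) {p : ℝ} (hp : 0 ≤ p) :
    Integrable (fun q : X × U => ‖q.1 - g q.1 q.2‖ ^ p) (ν.prod η) := by
  obtain ⟨R, hR⟩ := hK.exists_norm_le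
  obtain ⟨R', hR'⟩ := hgb.exists_norm_le
  refine integrable_norm_rpow_of_ae_norm_le (C := R + R') hp (by fun_prop) ?_
  filter_upwards [Measure.quasiMeasurePreserving_fst.ae (ae_iff.2 hνK)] with q hq
  exact (norm_sub_le _ _).trans (add_le_add (hR _ hq) (hR' _ (mem_range_self q)))

theorem integral_splitCoupling_le [NormedAddCommGroup X] [BorelSpace X]
    [SecondCountableTopology X] [SFinite π] [IsProbabilityMeasure η] {μ ν : Measure X}
    (hπμ : π.map Prod.fst = μ)
    (hπν : π.map Prod.snd = ν) (hf : Measurable f) (hg : Measurable (uncurry g)) {p : ℝ}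
    (hp0 : 0 ≤ p) (hp2 : p ≤ 2) (hfμ : Integrable (fun x => ‖x - f x‖ ^ p) μ)
    (hgν : Integrable (fun q : X × U => ‖q.1 - g q.1 q.2‖ ^ p) (ν.prod η)) :
    ∫ q, (‖q.1.1 - q.2.1‖ ^ (2 : ℝ) + ‖q.1.2 - q.2.2‖ ^ (2 : ℝ)) ^ (p / 2)
        ∂(splitCoupling f g π η)
      ≤ ∫ x, ‖x - f x‖ ^ p ∂μ + ∫ q, ‖q.1 - g q.1 q.2‖ ^ p ∂(ν.prod η) := by
  have hμ : MeasurePreserving (fun q : (X × X) × U => q.1.1) (π.prod η) μ :=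
    (MeasurePreserving.mk measurable_fst hπμ).comp measurePreserving_fst
  have hν : MeasurePreserving (fun q : (X × X) × U => (q.1.2, q.2)) (π.prod η) (ν.prod η) :=
    (MeasurePreserving.mk measurable_snd hπν).prod (MeasurePreserving.id η)
  have hfμ' : Integrable (fun q : (X × X) × U => ‖q.1.1 - f q.1.1‖ ^ p) (π.prod η) :=
    hμ.integrable_comp_of_integrable hfμ
  have hgν' : Integrable (fun q : (X × X) × U => ‖q.1.2 - g q.1.2 q.2‖ ^ p) (π.prod η) :=
    hν.integrable_comp_of_integrable hgν
  rw [splitCoupling, integral_map (measurable_splitCoupling_map hf hg).aemeasurable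
    (by fun_prop (disch := positivity))]
  calc _ ≤ ∫ q, (‖q.1.1 - f q.1.1‖ ^ p + ‖q.1.2 - g q.1.2 q.2‖ ^ p) ∂(π.prod η) :=
        integral_mono_of_nonneg (ae_of_all _ fun q => by positivity) (hfμ'.add hgν')
          (ae_of_all _ fun q => by
            simpa only [norm_sub_rev] using
              sq_add_sq_rpow_div_two_le (norm_nonneg _) (norm_nonneg _) hp0 hp2)
    _ = _ := by
      rw [integral_add hfμ' hgν', hμ.integral_comp_of_aestronglyMeasurable hfμ.1,
        hν.integral_comp_of_aestronglyMeasurable hgν.1]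

end SplitCoupling

theorem stmt19_general (d : ℕ) (p : ℝ) (hp1 : 1 ≤ p) (hp2 : p ≤ 2)
    (μ ν : Measure (Ed d)) [IsProbabilityMeasure μ] [IsProbabilityMeasure ν]
    (hμ2 : Integrable (fun x => ‖x‖ ^ (2 : ℝ)) μ)
    (hνc : ∃ Kc : Set (Ed d), IsCompact Kc ∧ ν Kcᶜ = 0)
    (Γ : Finset (Ed d))
    (f : Ed d → Ed d) (hf : IsNearestProj Γ f)
    (Γ' : Finset (Ed d))
    (g : Ed d → ℝ → Ed d) (hgmeas : Measurable fun q : Ed d × ℝ => g q.1 q.2)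
    (hgrange : ∀ y u, g y u ∈ Γ')
    (π : Measure (Ed d × Ed d)) (hπ : IsMartingaleCoupling π μ ν) :
    sInf {c | ∃ ρ : Measure ((Ed d × Ed d) × (Ed d × Ed d)), IsProbabilityMeasure ρ ∧
        ρ.map Prod.fst
          = (π.prod (volume.restrict (Icc (0:ℝ) 1))).map (fun q => (f q.1.1, g q.1.2 q.2)) ∧
        ρ.map Prod.snd = π ∧
        c = ∫ q, (‖q.1.1 - q.2.1‖ ^ (2 : ℝ) + ‖q.1.2 - q.2.2‖ ^ (2 : ℝ)) ^ (p / 2) ∂ρ}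
      ≤ (∫ x, ‖x - f x‖ ^ (2 : ℝ) ∂μ) ^ (p / 2)
        + ∫ q, ‖q.1 - g q.1 q.2‖ ^ p ∂(ν.prod (volume.restrict (Icc (0:ℝ) 1))) := by
  obtain ⟨hπP, ⟨hπμ, hπν⟩, -⟩ := hπ
  obtain ⟨hfm, hfΓ⟩ := hf
  obtain ⟨Kc, hKc, hνKc⟩ := hνc
  have : IsProbabilityMeasure (volume.restrict (Icc (0:ℝ) 1)) := ⟨by simp⟩
  have hp0 : 0 < p := by linarith
  have hx : MemLp (fun x : Ed d => x) 2 μ :=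
    (memLp_two_iff_integrable_sq_norm aestronglyMeasurable_id).2 (by simpa using hμ2)
  have hxf : MemLp (fun x => x - f x) (ENNReal.ofReal 2) μ := by
    rw [ENNReal.ofReal_ofNat]
    exact hx.sub_of_isBounded_range hfm.aestronglyMeasurable
      (Γ.finite_toSet.isBounded.subset (range_subset_iff.2 fun x => (hfΓ x).1))
  have hg_int := integrable_norm_sub_rpow_prod (η := volume.restrict (Icc (0:ℝ) 1))
    hKc.isBounded hνKc hgmeas (Γ'.finite_toSet.isBounded.subset
      (range_subset_iff.2 fun q => hgrange q.1 q.2)) hp0.le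
  refine (csInf_le ⟨0, ?_⟩ (mem_ofPred.2 ⟨splitCoupling f g π _,
    isProbabilityMeasure_splitCoupling hfm hgmeas, splitCoupling_map_fst hfm hgmeas,
    splitCoupling_map_snd hfm hgmeas, rfl⟩)).trans ?_
  · rintro _ ⟨ρ, -, -, -, rfl⟩
    exact integral_nonneg fun q => by positivity
  calc _ ≤ _ := integral_splitCoupling_le hπμ hπν hfm hgmeas hp0.le hp2 (by
        simpa [hp0.le] using
          (hxf.mono_exponent (ENNReal.ofReal_le_ofReal hp2)).integrable_norm_rpow') hg_int
    _ ≤ _ := by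
      gcongr
      simpa using integral_norm_rpow_le_rpow_integral_norm_rpow hp0 hp2 hxf

theorem stmt19 (d N K : ℕ) (p : ℝ) (hp1 : 1 ≤ p) (hp2 : p ≤ 2)
    (μ ν : Measure (Ed d)) [IsProbabilityMeasure μ] [IsProbabilityMeasure ν]
    (hμ2 : Integrable (fun x => ‖x‖ ^ (2 : ℝ)) μ)
    (hcvx : ConvexOrder μ ν)
    (hνc : ∃ Kc : Set (Ed d), IsCompact Kc ∧ ν Kcᶜ = 0)
    (Γ : Finset (Ed d)) (hΓ : IsOptimalQuantizer 2 N Γ μ)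
    (f : Ed d → Ed d) (hf : IsNearestProj Γ f)
    -- `f` realizes the optimal quadratic primal quantization error `e_{2,N}(μ)²`
    (hfopt : ∫ x, ‖x - f x‖ ^ (2 : ℝ) ∂μ
      = sInf {c | ∃ Γ₂ : Finset (Ed d), Γ₂.Nonempty ∧ Γ₂.card ≤ N ∧
          c = quantErrPow 2 Γ₂ μ})
    (Γ' : Finset (Ed d)) (hΓ'card : Γ'.card ≤ K)
    (g : Ed d → ℝ → Ed d) (hgmeas : Measurable fun q : Ed d × ℝ => g q.1 q.2)
    (hgrange : ∀ y u, g y u ∈ Γ')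
    (hgstat : ∀ y ∈ convexHull ℝ (Γ' : Set (Ed d)), ∫ u in Icc (0:ℝ) 1, g y u = y)
    (hνsupp : ν ((convexHull ℝ (Γ' : Set (Ed d)))ᶜ) = 0)
    -- `g` realizes the optimal `L^p` dual quantization error `d_{p,K}(ν)^p`
    (hgopt : ∫ q, ‖q.1 - g q.1 q.2‖ ^ p ∂(ν.prod (volume.restrict (Icc (0:ℝ) 1)))
      = sInf {c | ∃ ν' : Measure (Ed d), IsProbabilityMeasure ν' ∧ SuppLE K ν' ∧
          ConvexOrder ν ν' ∧
          ∃ π' : Measure (Ed d × Ed d), IsMartingaleCoupling π' ν ν' ∧ c = pCost p π'})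
    (π : Measure (Ed d × Ed d)) (hπ : IsMartingaleCoupling π μ ν) :
    sInf {c | ∃ ρ : Measure ((Ed d × Ed d) × (Ed d × Ed d)), IsProbabilityMeasure ρ ∧
        ρ.map Prod.fst
          = (π.prod (volume.restrict (Icc (0:ℝ) 1))).map (fun q => (f q.1.1, g q.1.2 q.2)) ∧
        ρ.map Prod.snd = π ∧
        c = ∫ q, (‖q.1.1 - q.2.1‖ ^ (2 : ℝ) + ‖q.1.2 - q.2.2‖ ^ (2 : ℝ)) ^ (p / 2) ∂ρ}
      ≤ (∫ x, ‖x - f x‖ ^ (2 : ℝ) ∂μ) ^ (p / 2)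
        + ∫ q, ‖q.1 - g q.1 q.2‖ ^ p ∂(ν.prod (volume.restrict (Icc (0:ℝ) 1))) :=
  stmt19_general d p hp1 hp2 μ ν hμ2 hνc Γ f hf Γ' g hgmeas hgrange π hπ
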